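/- arXiv:2511.20743 — 13 statements merged into one kernel-verified Lean document; each statement's English description precedes it below -/
import Mathlib

section
/- Let d, e, f be positive natural numbers and let t : Fin d → Fin e → ℂ and u : Fin d → Fin f → ℂ be families of complex numbers (the evaluated terms of a formula in disjunctive normal form). Then the disjunction ∃ i : Fin d, ((∀ j : Fin e, t i j = 0) ∧ (∀ k : Fin f, u i k ≠ 0)) holds if and only if there exists a : ℂ such that for all b : ℂ, ∏_{i : Fin d} ((1 − a · ∏_{k : Fin f} u i k) + ∑_{j : Fin e} (t i j) · b^(j+1)) = 0. -/
open Polynomial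

theorem boolean_elim_EA_pointwise (d e f : ℕ) (hd : 0 < d) (he : 0 < e) (hf : 0 < f)
    (t : Fin d → Fin e → ℂ) (u : Fin d → Fin f → ℂ) :
    (∃ i : Fin d, (∀ j : Fin e, t i j = 0) ∧ (∀ k : Fin f, u i k ≠ 0)) ↔
    (∃ a : ℂ, ∀ b : ℂ,
      ∏ i : Fin d,
        ((1 - a * ∏ k : Fin f, u i k) + ∑ j : Fin e, t i j * b ^ ((j : ℕ) + 1)) = 0) := by
  constructor
  · rintro ⟨i, ht, hu⟩
    have hne : (∏ k : Fin f, u i k) ≠ 0 := Finset.prod_ne_zero_iff.2 fun k _ => hu k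
    refine ⟨(∏ k : Fin f, u i k)⁻¹, fun b => Finset.prod_eq_zero (Finset.mem_univ i) ?_⟩
    simp [ht, inv_mul_cancel₀ hne]
  · rintro ⟨a, hb⟩
    set P : Fin d → ℂ[X] := fun i =>
      C (1 - a * ∏ k, u i k) + ∑ j : Fin e, C (t i j) * X ^ ((j : ℕ) + 1) with hP
    have hprod : (∏ i, P i) = 0 := by
      apply Polynomial.zero_of_eval_zero
      intro b
      rw [Polynomial.eval_prod]
      simp only [hP, eval_add, eval_sub, eval_one, eval_mul, eval_C, eval_finset_sum, eval_pow, eval_X]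
      exact hb b
    obtain ⟨i, -, hi⟩ := Finset.prod_eq_zero_iff.mp hprod
    have hcoeff : ∀ n, (P i).coeff n = 0 := by
      intro n; rw [hi]; simp
    refine ⟨i, ?_, ?_⟩
    · intro j
      have h := hcoeff ((j : ℕ) + 1)
      simp only [hP, Polynomial.coeff_add, Polynomial.coeff_C,
        Polynomial.finset_sum_coeff, Polynomial.coeff_C_mul,
        Polynomial.coeff_X_pow] at h
      rw [if_neg (by omega)] at h
      rw [zero_add] at h
      rw [Finset.sum_eq_single j (fun j' _ hj' => by
        rw [if_neg (fun hh => hj' (Fin.ext (by omega))), mul_zero]) (by simp)] at h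
      simpa using h
    · intro k
      have h := hcoeff 0
      simp only [hP, Polynomial.coeff_add, Polynomial.coeff_C,
        Polynomial.finset_sum_coeff, Polynomial.coeff_C_mul,
        Polynomial.coeff_X_pow] at h
      simp at h
      have hne : (∏ k : Fin f, u i k) ≠ 0 := by
        intro h0
        rw [h0] at h
        simp at h
      exact fun hk => hne (Finset.prod_eq_zero (Finset.mem_univ k) hk)
end

section
/- Let d, e, f be positive natural numbers and let t : Fin d → Fin e → ℂ and u : Fin d → Fin f → ℂ be families of complex numbers (the evaluated terms of a formula in conjunctive normal form). Then the conjunction ∀ i : Fin d, ((∃ j : Fin e, t i j = 0) ∨ (∃ k : Fin f, u i k ≠ 0)) holds if and only if for every a : ℂ there exists b : ℂ such that (1 − b · ∏_{i : Fin d} (a − (i+1))) · (∑_{i : Fin d} (∏_{h : Fin d, h ≠ i} (a − (h+1))) · (∏_{j : Fin e} t i j) · (∏_{k : Fin f} (1 − b · u i k))) = 0, where i+1 and h+1 denote the natural numbers 1, …, d cast into ℂ. -/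
theorem boolean_elim_AE_pointwise (d e f : ℕ) (hd : 0 < d) (he : 0 < e) (hf : 0 < f)
    (t : Fin d → Fin e → ℂ) (u : Fin d → Fin f → ℂ) :
    (∀ i : Fin d, (∃ j : Fin e, t i j = 0) ∨ (∃ k : Fin f, u i k ≠ 0)) ↔
    (∀ a : ℂ, ∃ b : ℂ,
      (1 - b * ∏ i : Fin d, (a - (((i : ℕ) + 1 : ℕ) : ℂ))) *
        (∑ i : Fin d,
          (∏ h ∈ Finset.univ.erase i, (a - (((h : ℕ) + 1 : ℕ) : ℂ))) *
            (∏ j : Fin e, t i j) * (∏ k : Fin f, (1 - b * u i k))) = 0) := by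
  constructor
  · intro H a
    by_cases hP : (∏ i : Fin d, (a - (((i : ℕ) + 1 : ℕ) : ℂ))) = 0
    · obtain ⟨i, -, hi⟩ := Finset.prod_eq_zero_iff.mp hP
      have key : ∀ b : ℂ,
          (∏ j : Fin e, t i j) * (∏ k : Fin f, (1 - b * u i k)) = 0 →
          (1 - b * ∏ i : Fin d, (a - (((i : ℕ) + 1 : ℕ) : ℂ))) *
            (∑ i : Fin d,
              (∏ h ∈ Finset.univ.erase i, (a - (((h : ℕ) + 1 : ℕ) : ℂ))) *
                (∏ j : Fin e, t i j) * (∏ k : Fin f, (1 - b * u i k))) = 0 := by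
        intro b hz
        apply mul_eq_zero_of_right
        apply Finset.sum_eq_zero
        intro i' _
        by_cases h : i' = i
        · subst h
          rw [mul_assoc, hz, mul_zero]
        · have : (∏ h ∈ Finset.univ.erase i', (a - (((h : ℕ) + 1 : ℕ) : ℂ))) = 0 :=
            Finset.prod_eq_zero (Finset.mem_erase.mpr ⟨fun hh => h hh.symm, Finset.mem_univ i⟩) hi
          rw [this, zero_mul, zero_mul]
      rcases H i with ⟨j, hj⟩ | ⟨k, hk⟩
      · exact ⟨0, key 0 (by rw [Finset.prod_eq_zero (Finset.mem_univ j) hj, zero_mul])⟩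
      · refine ⟨(u i k)⁻¹, key _ ?_⟩
        apply mul_eq_zero_of_right
        apply Finset.prod_eq_zero (Finset.mem_univ k)
        rw [inv_mul_cancel₀ hk, sub_self]
    · refine ⟨(∏ i : Fin d, (a - (((i : ℕ) + 1 : ℕ) : ℂ)))⁻¹, ?_⟩
      rw [inv_mul_cancel₀ hP, sub_self, zero_mul]
  · intro H i
    by_contra hc
    push_neg at hc
    obtain ⟨ht, hu⟩ := hc
    obtain ⟨b, hb⟩ := H ((((i : ℕ) + 1 : ℕ)) : ℂ)
    set a : ℂ := (((i : ℕ) + 1 : ℕ) : ℂ) with ha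
    have hfac : (1 - b * ∏ i' : Fin d, (a - (((i' : ℕ) + 1 : ℕ) : ℂ))) = 1 := by
      rw [Finset.prod_eq_zero (Finset.mem_univ i) (by rw [ha, sub_self]), mul_zero, sub_zero]
    have hsum : (∑ i' : Fin d,
        (∏ h ∈ Finset.univ.erase i', (a - (((h : ℕ) + 1 : ℕ) : ℂ))) *
          (∏ j : Fin e, t i' j) * (∏ k : Fin f, (1 - b * u i' k))) =
        (∏ h ∈ Finset.univ.erase i, (a - (((h : ℕ) + 1 : ℕ) : ℂ))) *
          (∏ j : Fin e, t i j) * (∏ k : Fin f, (1 - b * u i k)) := by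
      apply Finset.sum_eq_single
      · intro i' _ h
        have : (∏ h ∈ Finset.univ.erase i', (a - (((h : ℕ) + 1 : ℕ) : ℂ))) = 0 :=
          Finset.prod_eq_zero (Finset.mem_erase.mpr ⟨h.symm, Finset.mem_univ i⟩)
            (by rw [ha, sub_self])
        rw [this, zero_mul, zero_mul]
      · intro h; exact absurd (Finset.mem_univ i) h
    rw [hfac, one_mul, hsum] at hb
    have hP : (∏ h ∈ Finset.univ.erase i, (a - (((h : ℕ) + 1 : ℕ) : ℂ))) ≠ 0 := by
      rw [Finset.prod_ne_zero_iff]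
      intro h hh
      have hne : (h : ℕ) ≠ (i : ℕ) := fun hq => (Finset.mem_erase.mp hh).1 (Fin.ext hq)
      intro hz
      apply hne
      have : ((((h : ℕ) + 1 : ℕ)) : ℂ) = (((i : ℕ) + 1 : ℕ) : ℂ) := by
        rw [ha] at hz
        linear_combination -hz
      exact Nat.succ_injective (Nat.cast_injective this)
    have hT : (∏ j : Fin e, t i j) ≠ 0 := Finset.prod_ne_zero_iff.mpr fun j _ => ht j
    have hU : (∏ k : Fin f, (1 - b * u i k)) = 1 := by
      apply Finset.prod_eq_one
      intro k _
      rw [hu k, mul_zero, sub_zero]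
    rw [hU, mul_one] at hb
    exact (mul_ne_zero hP hT) hb
end

section
/- Let n, d, e, f be positive natural numbers and let t : Fin d → Fin e → MvPolynomial (Fin n) ℂ and u : Fin d → Fin f → MvPolynomial (Fin n) ℂ be families of complex polynomials in n variables. Then there exists a polynomial q in the variables a, b, x₁, …, xₙ with complex coefficients (formally, q : MvPolynomial (Fin 2 ⊕ Fin n) ℂ), whose degree in the variable a is at most 2d − 1 and whose degree in the variable b is at most f + 1, such that for every x : Fin n → ℂ: (∀ i : Fin d, ((∃ j : Fin e, MvPolynomial.eval x (t i j) = 0) ∨ (∃ k : Fin f, MvPolynomial.eval x (u i k) ≠ 0))) ↔ (∀ a : ℂ, ∃ b : ℂ, the evaluation of q at (a, b, x) equals 0). -/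
open Polynomial in
lemma root_of_coeff' (p : Polynomial ℂ) (m : ℕ) (hm : 0 < m) (h : p.coeff m ≠ 0) :
    ∃ z : ℂ, p.eval z = 0 := by
  have hd : 0 < p.degree := lt_of_lt_of_le (by exact_mod_cast hm) (Polynomial.le_degree_of_ne_zero h)
  obtain ⟨z, hz⟩ := Complex.exists_root hd
  exact ⟨z, hz⟩

open Polynomial in
lemma sum_coeff' (f : ℕ) (U : Fin f → ℂ) (k0 : Fin f) :
    ((∑ k : Fin f, Polynomial.C (U k) * X ^ (k.1 + 1)) + Polynomial.C (-1 : ℂ)).coeff (k0.1 + 1) = U k0 := by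
  rw [Polynomial.coeff_add, Polynomial.finset_sum_coeff]
  have h1 : (Polynomial.C (-1 : ℂ)).coeff (k0.1+1) = 0 := by
    simp [Polynomial.coeff_C, Polynomial.coeff_one]
  rw [h1, add_zero]
  rw [Finset.sum_eq_single k0]
  · simp
  · intro k _ hk
    have : k0.1 + 1 ≠ k.1 + 1 := by
      simp only [ne_eq, add_left_inj]
      exact fun h => hk (Fin.ext h.symm)
    rw [Polynomial.coeff_C_mul, Polynomial.coeff_X_pow, if_neg this, mul_zero]
  · simp

open Polynomial in
lemma exists_b' (f : ℕ) (U : Fin f → ℂ) (T : ℂ) :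
    (∃ b : ℂ, T * ((∑ k : Fin f, U k * b ^ (k.1 + 1)) + -1) = 0) ↔ (T = 0 ∨ ∃ k, U k ≠ 0) := by
  constructor
  · rintro ⟨b, hb⟩
    rcases mul_eq_zero.mp hb with h | h
    · exact Or.inl h
    · right
      by_contra hU
      push_neg at hU
      simp [hU] at h
  · rintro (h | ⟨k0, hk0⟩)
    · exact ⟨0, by simp [h]⟩
    · set p : Polynomial ℂ := (∑ k : Fin f, Polynomial.C (U k) * X ^ (k.1 + 1)) + Polynomial.C (-1 : ℂ) with hp
      have hc : p.coeff (k0.1 + 1) ≠ 0 := by rw [hp, sum_coeff']; exact hk0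
      obtain ⟨z, hz⟩ := root_of_coeff' p _ (Nat.succ_pos _) hc
      refine ⟨z, ?_⟩
      have : p.eval z = (∑ k : Fin f, U k * z ^ (k.1 + 1)) + -1 := by
        simp [hp, Polynomial.eval_finset_sum]
      rw [this] at hz
      rw [hz, mul_zero]

lemma degreeOf_rename_inr' {n : ℕ} (s : Fin 2) (p : MvPolynomial (Fin n) ℂ) :
    MvPolynomial.degreeOf (Sum.inl s : Fin 2 ⊕ Fin n) (MvPolynomial.rename Sum.inr p) = 0 := by
  classical
  rw [MvPolynomial.degreeOf_eq_sup]
  apply Nat.le_zero.mp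
  apply Finset.sup_le
  intro m hm
  rw [Nat.le_zero]
  by_contra h
  have hv : (Sum.inl s : Fin 2 ⊕ Fin n) ∈ (MvPolynomial.rename Sum.inr p).vars :=
    (MvPolynomial.mem_vars _).mpr ⟨m, hm, Finsupp.mem_support_iff.mpr h⟩
  have := MvPolynomial.vars_rename Sum.inr p hv
  simp at this

theorem boolean_elim_AE (n d e f : ℕ) (hn : 0 < n) (hd : 0 < d) (he : 0 < e) (hf : 0 < f)
    (t : Fin d → Fin e → MvPolynomial (Fin n) ℂ)
    (u : Fin d → Fin f → MvPolynomial (Fin n) ℂ) :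
    ∃ q : MvPolynomial (Fin 2 ⊕ Fin n) ℂ,
      MvPolynomial.degreeOf (Sum.inl 0) q ≤ 2 * d - 1 ∧
      MvPolynomial.degreeOf (Sum.inl 1) q ≤ f + 1 ∧
      ∀ x : Fin n → ℂ,
        ((∀ i : Fin d, (∃ j : Fin e, MvPolynomial.eval x (t i j) = 0) ∨
            (∃ k : Fin f, MvPolynomial.eval x (u i k) ≠ 0)) ↔
          (∀ a : ℂ, ∃ b : ℂ, MvPolynomial.eval (Sum.elim ![a, b] x) q = 0)) := by
  classical
  open MvPolynomial in
  set A : MvPolynomial (Fin 2 ⊕ Fin n) ℂ := X (Sum.inl 0) with hA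
  set B : MvPolynomial (Fin 2 ⊕ Fin n) ℂ := X (Sum.inl 1) with hB
  set q : MvPolynomial (Fin 2 ⊕ Fin n) ℂ :=
    (∑ i : Fin d, (∏ j ∈ Finset.univ.erase i, (A + MvPolynomial.C (-(j.1:ℂ)))) *
        (MvPolynomial.rename Sum.inr (∏ j : Fin e, t i j) *
          ((∑ k : Fin f, MvPolynomial.rename Sum.inr (u i k) * B^(k.1+1)) + MvPolynomial.C (-1)))) +
      (∏ i : Fin d, (A + MvPolynomial.C (-(i.1:ℂ)))) * B^(f+1) with hq
  refine ⟨q, ?_, ?_, ?_⟩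
  · -- degree in A
    have hd1 : ∀ c : ℂ, MvPolynomial.degreeOf (Sum.inl 0 : Fin 2 ⊕ Fin n) (A + MvPolynomial.C c) ≤ 1 := by
      intro c
      refine le_trans (MvPolynomial.degreeOf_add_le _ _ _) ?_
      rw [hA, MvPolynomial.degreeOf_X, MvPolynomial.degreeOf_C]
      simp
    have hB0 : MvPolynomial.degreeOf (Sum.inl 0 : Fin 2 ⊕ Fin n) B = 0 := by
      rw [hB, MvPolynomial.degreeOf_X, if_neg (by simp)]
    have hR0 : ∀ i : Fin d, MvPolynomial.degreeOf (Sum.inl 0 : Fin 2 ⊕ Fin n)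
        (MvPolynomial.rename Sum.inr (∏ j : Fin e, t i j) *
          ((∑ k : Fin f, MvPolynomial.rename Sum.inr (u i k) * B^(k.1+1)) + MvPolynomial.C (-1))) = 0 := by
      intro i
      refine Nat.le_zero.mp (le_trans (MvPolynomial.degreeOf_mul_le _ _ _) ?_)
      rw [degreeOf_rename_inr', zero_add]
      refine le_trans (MvPolynomial.degreeOf_add_le _ _ _) ?_
      rw [MvPolynomial.degreeOf_C]
      refine max_le (le_trans (MvPolynomial.degreeOf_sum_le _ _ _) ?_) le_rfl
      apply Finset.sup_le
      intro k _
      refine le_trans (MvPolynomial.degreeOf_mul_le _ _ _) ?_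
      rw [degreeOf_rename_inr', zero_add]
      refine le_trans (MvPolynomial.degreeOf_pow_le _ _ _) ?_
      rw [hB0, Nat.mul_zero]
    rw [hq]
    refine le_trans (MvPolynomial.degreeOf_add_le _ _ _) (max_le ?_ ?_)
    · refine le_trans (MvPolynomial.degreeOf_sum_le _ _ _) ?_
      apply Finset.sup_le
      intro i _
      refine le_trans (MvPolynomial.degreeOf_mul_le _ _ _) ?_
      rw [hR0 i, Nat.add_zero]
      refine le_trans (MvPolynomial.degreeOf_prod_le _ _ _) ?_
      calc (∑ j ∈ Finset.univ.erase i, MvPolynomial.degreeOf (Sum.inl 0) (A + MvPolynomial.C (-(j.1:ℂ))))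
          ≤ ∑ j ∈ Finset.univ.erase i, 1 := Finset.sum_le_sum (fun j _ => hd1 _)
        _ = (Finset.univ.erase i).card := by simp
        _ ≤ d := by
            rw [Finset.card_erase_of_mem (Finset.mem_univ i), Finset.card_univ, Fintype.card_fin]
            omega
        _ ≤ 2*d - 1 := by omega
    · refine le_trans (MvPolynomial.degreeOf_mul_le _ _ _) ?_
      have : MvPolynomial.degreeOf (Sum.inl 0 : Fin 2 ⊕ Fin n) (B^(f+1)) = 0 := by
        refine Nat.le_zero.mp (le_trans (MvPolynomial.degreeOf_pow_le _ _ _) ?_)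
        rw [hB0, Nat.mul_zero]
      rw [this, Nat.add_zero]
      refine le_trans (MvPolynomial.degreeOf_prod_le _ _ _) ?_
      calc (∑ i : Fin d, MvPolynomial.degreeOf (Sum.inl 0) (A + MvPolynomial.C (-(i.1:ℂ))))
          ≤ ∑ _i : Fin d, 1 := Finset.sum_le_sum (fun i _ => hd1 _)
        _ = d := by simp
        _ ≤ 2*d - 1 := by omega
  · -- degree in B
    have hf1 : ∀ c : ℂ, MvPolynomial.degreeOf (Sum.inl 1 : Fin 2 ⊕ Fin n) (A + MvPolynomial.C c) = 0 := by
      intro c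
      refine Nat.le_zero.mp (le_trans (MvPolynomial.degreeOf_add_le _ _ _) ?_)
      rw [hA, MvPolynomial.degreeOf_X, if_neg (by simp), MvPolynomial.degreeOf_C]
      simp
    have hB1 : MvPolynomial.degreeOf (Sum.inl 1 : Fin 2 ⊕ Fin n) B = 1 := by
      rw [hB, MvPolynomial.degreeOf_X, if_pos rfl]
    rw [hq]
    refine le_trans (MvPolynomial.degreeOf_add_le _ _ _) (max_le ?_ ?_)
    · refine le_trans (MvPolynomial.degreeOf_sum_le _ _ _) ?_
      apply Finset.sup_le
      intro i _
      refine le_trans (MvPolynomial.degreeOf_mul_le _ _ _) ?_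
      have hL : MvPolynomial.degreeOf (Sum.inl 1 : Fin 2 ⊕ Fin n)
          (∏ j ∈ Finset.univ.erase i, (A + MvPolynomial.C (-(j.1:ℂ)))) = 0 := by
        refine Nat.le_zero.mp (le_trans (MvPolynomial.degreeOf_prod_le _ _ _) ?_)
        apply le_of_eq
        apply Finset.sum_eq_zero
        intro j _
        exact hf1 _
      rw [hL, Nat.zero_add]
      refine le_trans (MvPolynomial.degreeOf_mul_le _ _ _) ?_
      rw [degreeOf_rename_inr', Nat.zero_add]
      refine le_trans (MvPolynomial.degreeOf_add_le _ _ _) ?_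
      rw [MvPolynomial.degreeOf_C]
      refine max_le (le_trans (MvPolynomial.degreeOf_sum_le _ _ _) ?_) (by omega)
      apply Finset.sup_le
      intro k _
      refine le_trans (MvPolynomial.degreeOf_mul_le _ _ _) ?_
      rw [degreeOf_rename_inr', Nat.zero_add]
      refine le_trans (MvPolynomial.degreeOf_pow_le _ _ _) ?_
      rw [hB1, Nat.mul_one]
      omega
    · refine le_trans (MvPolynomial.degreeOf_mul_le _ _ _) ?_
      have hW : MvPolynomial.degreeOf (Sum.inl 1 : Fin 2 ⊕ Fin n)
          (∏ i : Fin d, (A + MvPolynomial.C (-(i.1:ℂ)))) = 0 := by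
        refine Nat.le_zero.mp (le_trans (MvPolynomial.degreeOf_prod_le _ _ _) ?_)
        apply le_of_eq
        apply Finset.sum_eq_zero
        intro i _
        exact hf1 _
      rw [hW, Nat.zero_add]
      refine le_trans (MvPolynomial.degreeOf_pow_le _ _ _) ?_
      rw [hB1, Nat.mul_one]
  · intro x
    set T : Fin d → ℂ := fun i => ∏ j : Fin e, MvPolynomial.eval x (t i j) with hT
    set U : Fin d → Fin f → ℂ := fun i k => MvPolynomial.eval x (u i k) with hU
    have hev : ∀ a b : ℂ, MvPolynomial.eval (Sum.elim ![a, b] x) q =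
        (∑ i : Fin d, (∏ j ∈ Finset.univ.erase i, (a + -(j.1:ℂ))) *
            (T i * ((∑ k : Fin f, U i k * b^(k.1+1)) + -1))) +
          (∏ i : Fin d, (a + -(i.1:ℂ))) * b^(f+1) := by
      intro a b
      have h0 : Sum.elim ![a, b] x (Sum.inl 0) = a := rfl
      have h1 : Sum.elim ![a, b] x (Sum.inl 1) = b := rfl
      have h2 : Sum.elim ![a, b] x ∘ Sum.inr = x := rfl
      simp [hq, hA, hB, map_add, map_mul, map_sum, map_prod, map_pow,
        MvPolynomial.eval_rename, h0, h1, h2, hT, hU]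
    -- value at a node
    have hnode : ∀ (i : Fin d) (b : ℂ),
        MvPolynomial.eval (Sum.elim ![(i.1:ℂ), b] x) q =
          (∏ j ∈ Finset.univ.erase i, ((i.1:ℂ) + -(j.1:ℂ))) *
            (T i * ((∑ k : Fin f, U i k * b^(k.1+1)) + -1)) := by
      intro i b
      rw [hev]
      have hW : (∏ i' : Fin d, ((i.1:ℂ) + -(i'.1:ℂ))) = 0 :=
        Finset.prod_eq_zero (Finset.mem_univ i) (by ring)
      rw [hW, zero_mul, add_zero]
      rw [Finset.sum_eq_single i]
      · intro i' _ hi'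
        have : (∏ j ∈ Finset.univ.erase i', ((i.1:ℂ) + -(j.1:ℂ))) = 0 :=
          Finset.prod_eq_zero (Finset.mem_erase.mpr ⟨hi'.symm, Finset.mem_univ i⟩) (by ring)
        rw [this, zero_mul]
      · intro h; exact absurd (Finset.mem_univ i) h
    have hcne : ∀ i : Fin d, (∏ j ∈ Finset.univ.erase i, ((i.1:ℂ) + -(j.1:ℂ))) ≠ 0 := by
      intro i
      rw [Finset.prod_ne_zero_iff]
      intro j hj
      have hij : j ≠ i := (Finset.mem_erase.mp hj).1
      have : (i.1:ℂ) ≠ (j.1:ℂ) := by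
        simp only [ne_eq, Nat.cast_inj]
        exact fun h => hij (Fin.ext h.symm)
      intro hc
      exact this (by linear_combination hc)
    have hCi : ∀ i : Fin d,
        ((∃ j : Fin e, MvPolynomial.eval x (t i j) = 0) ∨
          (∃ k : Fin f, MvPolynomial.eval x (u i k) ≠ 0)) ↔
        (∃ b : ℂ, T i * ((∑ k : Fin f, U i k * b^(k.1+1)) + -1) = 0) := by
      intro i
      rw [exists_b' f (U i) (T i)]
      constructor
      · rintro (⟨j, hj⟩ | ⟨k, hk⟩)
        · exact Or.inl (Finset.prod_eq_zero (Finset.mem_univ j) hj)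
        · exact Or.inr ⟨k, hk⟩
      · rintro (h | ⟨k, hk⟩)
        · obtain ⟨j, _, hj⟩ := Finset.prod_eq_zero_iff.mp h
          exact Or.inl ⟨j, hj⟩
        · exact Or.inr ⟨k, hk⟩
    constructor
    · -- forward
      intro hC a
      by_cases hcase : ∃ i : Fin d, a = (i.1:ℂ)
      · obtain ⟨i, rfl⟩ := hcase
        obtain ⟨b, hb⟩ := (hCi i).mp (hC i)
        exact ⟨b, by rw [hnode i b, hb, mul_zero]⟩
      · push_neg at hcase
        -- build the polynomial in b
        set p : Polynomial ℂ :=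
          (∑ i : Fin d, Polynomial.C ((∏ j ∈ Finset.univ.erase i, (a + -(j.1:ℂ))) * T i) *
              ((∑ k : Fin f, Polynomial.C (U i k) * Polynomial.X^(k.1+1)) + Polynomial.C (-1))) +
            Polynomial.C (∏ i : Fin d, (a + -(i.1:ℂ))) * Polynomial.X^(f+1) with hp
        have hdegs : (∑ i : Fin d, Polynomial.C ((∏ j ∈ Finset.univ.erase i, (a + -(j.1:ℂ))) * T i) *
              ((∑ k : Fin f, Polynomial.C (U i k) * Polynomial.X^(k.1+1)) + Polynomial.C (-1))).natDegree ≤ f := by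
          apply Polynomial.natDegree_sum_le_of_forall_le
          intro i _
          refine le_trans (Polynomial.natDegree_C_mul_le _ _) ?_
          refine le_trans (Polynomial.natDegree_add_le _ _) ?_
          simp only [Polynomial.natDegree_C, max_le_iff]
          refine ⟨?_, Nat.zero_le f⟩
          apply Polynomial.natDegree_sum_le_of_forall_le
          intro k _
          refine le_trans (Polynomial.natDegree_C_mul_le _ _) ?_
          rw [Polynomial.natDegree_X_pow]
          exact k.2
        have hcoeff : p.coeff (f+1) = ∏ i : Fin d, (a + -(i.1:ℂ)) := by
          rw [hp, Polynomial.coeff_add,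
            Polynomial.coeff_eq_zero_of_natDegree_lt (lt_of_le_of_lt hdegs (Nat.lt_succ_self f)),
            zero_add, Polynomial.coeff_C_mul, Polynomial.coeff_X_pow, if_pos rfl, mul_one]
        have hcne2 : p.coeff (f+1) ≠ 0 := by
          rw [hcoeff, Finset.prod_ne_zero_iff]
          intro i _ hc
          exact hcase i (by linear_combination hc)
        obtain ⟨z, hz⟩ := root_of_coeff' p (f+1) (Nat.succ_pos f) hcne2
        refine ⟨z, ?_⟩
        rw [hev]
        rw [← hz, hp]
        simp only [Polynomial.eval_add, Polynomial.eval_mul, Polynomial.eval_pow,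
          Polynomial.eval_X, Polynomial.eval_C, Polynomial.eval_finset_sum]
        refine congrArg₂ (· + ·) (Finset.sum_congr rfl fun i _ => ?_) rfl
        ring
    · -- backward
      intro hq2 i
      obtain ⟨b, hb⟩ := hq2 (i.1:ℂ)
      rw [hnode i b] at hb
      rcases mul_eq_zero.mp hb with h | h
      · exact absurd h (hcne i)
      · exact (hCi i).mpr ⟨b, h⟩
end

section
/- There is no polynomial p in two variables a, y with complex coefficients (formally, no p : MvPolynomial (Fin 2) ℂ) such that for all y : ℂ, y ≠ 0 if and only if (∀ a : ℂ, the evaluation of p at (a, y) equals 0). -/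
lemma eval_aeval_aux (p : MvPolynomial (Fin 2) ℂ) (a y : ℂ) :
    Polynomial.eval y (MvPolynomial.aeval ![Polynomial.C a, Polynomial.X] p)
      = MvPolynomial.eval ![a, y] p := by
  induction p using MvPolynomial.induction_on with
  | C c => simp
  | add f g hf hg => simp [hf, hg]
  | mul_X f i hf =>
    simp only [map_mul, Polynomial.eval_mul, hf, MvPolynomial.eval_mul, MvPolynomial.aeval_X,
      MvPolynomial.eval_X]
    congr 1
    fin_cases i <;> simp

theorem no_universal_form_for_ne_zero :
    ¬ ∃ p : MvPolynomial (Fin 2) ℂ,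
        ∀ y : ℂ, y ≠ 0 ↔ (∀ a : ℂ, MvPolynomial.eval ![a, y] p = 0) := by
  rintro ⟨p, hp⟩
  have key : ∀ a : ℂ, MvPolynomial.eval ![a, (0:ℂ)] p = 0 := by
    intro a
    set q : Polynomial ℂ := MvPolynomial.aeval ![Polynomial.C a, Polynomial.X] p with hq
    have hzero : q * Polynomial.X = 0 := by
      apply Polynomial.zero_of_eval_zero
      intro y
      rcases eq_or_ne y 0 with rfl | hy
      · simp
      · simp [hq, eval_aeval_aux p a y, (hp y).mp hy a]
    have hq0 : q = 0 := by
      rcases mul_eq_zero.mp hzero with h | h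
      · exact h
      · exact absurd h Polynomial.X_ne_zero
    have := eval_aeval_aux p a 0
    rw [← hq, hq0] at this
    simpa using this.symm
  exact (hp 0).mpr key rfl
end

section
/- Let p be a polynomial in three variables a, y, z with complex coefficients (formally, p : MvPolynomial (Fin 3) ℂ), and let S = { (y, z) : ℂ × ℂ | ∃ a : ℂ, the evaluation of p at (a, y, z) equals 0 }. Then S is either empty or uncountable (i.e., S = ∅ ∨ ¬ S.Countable). -/
open MvPolynomial

private lemma eval_empty (q : MvPolynomial (Fin 0) ℂ) :
    MvPolynomial.eval (![] : Fin 0 → ℂ) q = q.coeff 0 := by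
  conv_lhs => rw [MvPolynomial.eq_C_of_isEmpty q]
  simp

private lemma root_iff (r : Polynomial ℂ) :
    (∃ x : ℂ, r.eval x = 0) ↔ r = 0 ∨ 0 < r.degree := by
  constructor
  · rintro ⟨x, hx⟩
    by_contra hc
    push_neg at hc
    obtain ⟨h1, h2⟩ := hc
    rw [Polynomial.eq_C_of_degree_le_zero h2] at hx h1
    simp only [Polynomial.eval_C] at hx
    simp [hx] at h1
  · rintro (rfl | h)
    · exact ⟨0, by simp⟩
    · exact Complex.exists_root h

private lemma uncount_of_image (T : Set (ℂ × ℂ)) (f : ℂ × ℂ → ℂ) (W : Set ℂ)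
    (hW : ¬ W.Countable) (h : W ⊆ f '' T) : ¬ T.Countable :=
  fun hc => hW ((hc.image f).mono h)

private lemma cofinite_uncountable {Z : Set ℂ} (hZ : Z.Finite) : ¬ (Zᶜ).Countable := by
  intro h
  apply not_countable_complex
  have := h.union hZ.countable
  simpa [Set.compl_union_self] using this

private lemma one_var_finite (f : MvPolynomial (Fin 1) ℂ) (hf : f ≠ 0) :
    {x : ℂ | MvPolynomial.eval ![x] f = 0}.Finite := by
  set g := Polynomial.map (MvPolynomial.eval (![] : Fin 0 → ℂ)) (MvPolynomial.finSuccEquiv ℂ 0 f)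
    with hg_def
  have key : ∀ x : ℂ, MvPolynomial.eval ![x] f = Polynomial.eval x g := fun x =>
    MvPolynomial.eval_eq_eval_mv_eval' (![] : Fin 0 → ℂ) x f
  have hg : g ≠ 0 := by
    intro h0
    apply hf
    have hq : MvPolynomial.finSuccEquiv ℂ 0 f = 0 := by
      apply Polynomial.ext
      intro n
      have := congrArg (fun q => Polynomial.coeff q n) h0
      simp only [hg_def, Polynomial.coeff_map, Polynomial.coeff_zero] at this
      rw [eval_empty] at this
      rw [Polynomial.coeff_zero, MvPolynomial.eq_C_of_isEmpty
        (((MvPolynomial.finSuccEquiv ℂ 0) f).coeff n), this]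
      simp
    exact (MvPolynomial.finSuccEquiv ℂ 0).injective (by rw [map_zero]; exact hq)
  have : {x : ℂ | MvPolynomial.eval ![x] f = 0} = {x : ℂ | g.IsRoot x} := by
    ext x; simp [key, Polynomial.IsRoot]
  rw [this]
  exact Polynomial.finite_setOf_isRoot hg

/-- nonvanishing set of nonzero bivariate polynomial is uncountable -/
private lemma lemM (d : MvPolynomial (Fin 2) ℂ) (hd : d ≠ 0) :
    ¬ {yz : ℂ × ℂ | MvPolynomial.eval ![yz.1, yz.2] d ≠ 0}.Countable := by
  set e := MvPolynomial.finSuccEquiv ℂ 1 d with he_def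
  have he : e ≠ 0 := fun h0 => hd ((MvPolynomial.finSuccEquiv ℂ 1).injective
    (by rw [map_zero, ← he_def]; exact h0))
  set j := e.natDegree with hj
  have hlc : e.coeff j ≠ 0 := Polynomial.leadingCoeff_ne_zero.mpr he
  have hZ : {z : ℂ | MvPolynomial.eval ![z] (e.coeff j) = 0}.Finite := one_var_finite _ hlc
  apply uncount_of_image _ Prod.snd _ (cofinite_uncountable hZ)
  rintro z hz
  simp only [Set.mem_compl_iff, Set.mem_setOf_eq] at hz
  -- the polynomial (e.map (eval ![z])) in y is nonzero, pick y where eval ≠ 0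
  set ez := e.map (MvPolynomial.eval ![z]) with hez
  have hez0 : ez ≠ 0 := by
    intro h0
    apply hz
    have := congrArg (fun q => Polynomial.coeff q j) h0
    simpa [hez, Polynomial.coeff_map] using this
  obtain ⟨y, hy⟩ : ∃ y : ℂ, ez.eval y ≠ 0 := by
    by_contra hc
    push_neg at hc
    apply hez0
    exact Polynomial.eq_zero_of_infinite_isRoot ez (Set.infinite_univ.mono (by intro x _; exact hc x))
  refine ⟨(y, z), ?_, rfl⟩
  simp only [Set.mem_setOf_eq]
  rw [show (![y, z] : Fin 2 → ℂ) = Fin.cons y ![z] from rfl,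
    MvPolynomial.eval_eq_eval_mv_eval']
  exact hy

/-- zero set of nonzero bivariate polynomial with a zero is uncountable -/
private lemma lemL (c : MvPolynomial (Fin 2) ℂ) (hc : c ≠ 0) (y₀ z₀ : ℂ)
    (h0 : MvPolynomial.eval ![y₀, z₀] c = 0) :
    ¬ {yz : ℂ × ℂ | MvPolynomial.eval ![yz.1, yz.2] c = 0}.Countable := by
  set e := MvPolynomial.finSuccEquiv ℂ 1 c with he_def
  have he : e ≠ 0 := fun h0' => hc ((MvPolynomial.finSuccEquiv ℂ 1).injective
    (by rw [map_zero, ← he_def]; exact h0'))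
  have key : ∀ y z : ℂ, MvPolynomial.eval ![y, z] c =
      Polynomial.eval y (e.map (MvPolynomial.eval ![z])) := fun y z => by
    rw [show (![y, z] : Fin 2 → ℂ) = Fin.cons y ![z] from rfl,
      MvPolynomial.eval_eq_eval_mv_eval']
  rcases Nat.eq_zero_or_pos e.natDegree with hdeg | hdeg
  · -- e constant: c depends only on z; zero set contains ℂ × {z₀}
    have hC : e = Polynomial.C (e.coeff 0) := Polynomial.eq_C_of_natDegree_eq_zero hdeg
    have hval : ∀ y z : ℂ, MvPolynomial.eval ![y, z] c = MvPolynomial.eval ![z] (e.coeff 0) := by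
      intro y z
      rw [key y z]
      conv_lhs => rw [hC]
      simp
    apply uncount_of_image _ Prod.fst _ not_countable_complex
    intro y _
    refine ⟨(y, z₀), ?_, rfl⟩
    simp only [Set.mem_setOf_eq]
    rw [hval y z₀, ← hval y₀ z₀]
    exact h0
  · -- positive degree in y: for cofinitely many z there is a root in y
    set j := e.natDegree with hj
    have hlc : e.coeff j ≠ 0 := Polynomial.leadingCoeff_ne_zero.mpr he
    have hZ : {z : ℂ | MvPolynomial.eval ![z] (e.coeff j) = 0}.Finite := one_var_finite _ hlc
    apply uncount_of_image _ Prod.snd _ (cofinite_uncountable hZ)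
    rintro z hz
    simp only [Set.mem_compl_iff, Set.mem_setOf_eq] at hz
    set ez := e.map (MvPolynomial.eval ![z]) with hez
    have hcoeff : ez.coeff j ≠ 0 := by simpa [hez, Polynomial.coeff_map] using hz
    have hdz : 0 < ez.degree := lt_of_lt_of_le (by exact_mod_cast hdeg)
      (Polynomial.le_degree_of_ne_zero hcoeff)
    obtain ⟨y, hy⟩ := Complex.exists_root hdz
    exact ⟨(y, z), by simpa [Set.mem_setOf_eq, key y z] using hy, rfl⟩

theorem exists_proj_zero_set_empty_or_uncountable (p : MvPolynomial (Fin 3) ℂ)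
    (S : Set (ℂ × ℂ))
    (hS : S = {yz : ℂ × ℂ | ∃ a : ℂ, MvPolynomial.eval ![a, yz.1, yz.2] p = 0}) :
    S = ∅ ∨ ¬ S.Countable := by
  by_cases hSe : S = ∅
  · exact Or.inl hSe
  right
  obtain ⟨⟨y₀, z₀⟩, hmem⟩ := Set.nonempty_iff_ne_empty.mpr hSe
  set q := MvPolynomial.finSuccEquiv ℂ 2 p with hq_def
  have key : ∀ a y z : ℂ, MvPolynomial.eval ![a, y, z] p =
      Polynomial.eval a (q.map (MvPolynomial.eval ![y, z])) := fun a y z => by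
    rw [show (![a, y, z] : Fin 3 → ℂ) = Fin.cons a ![y, z] from rfl,
      MvPolynomial.eval_eq_eval_mv_eval']
  rcases Nat.eq_zero_or_pos q.natDegree with hdeg | hdeg
  · -- q constant (in a)
    have hC : q = Polynomial.C (q.coeff 0) := Polynomial.eq_C_of_natDegree_eq_zero hdeg
    have hval : ∀ a y z : ℂ, MvPolynomial.eval ![a, y, z] p =
        MvPolynomial.eval ![y, z] (q.coeff 0) := by
      intro a y z
      rw [key a y z]
      conv_lhs => rw [hC]
      simp
    by_cases hc0 : q.coeff 0 = 0
    · -- p evaluates to 0 everywhere: S = univ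
      apply uncount_of_image _ Prod.fst _ not_countable_complex
      intro y _
      exact ⟨(y, 0), by simp [hS, Set.mem_setOf_eq]; exact ⟨0, by rw [hval]; simp [hc0]⟩, rfl⟩
    · -- S is the zero set of the bivariate polynomial q.coeff 0
      have hSeq : S = {yz : ℂ × ℂ | MvPolynomial.eval ![yz.1, yz.2] (q.coeff 0) = 0} := by
        rw [hS]
        ext ⟨y, z⟩
        simp only [Set.mem_setOf_eq]
        constructor
        · rintro ⟨a, ha⟩; rwa [hval a y z] at ha
        · intro h; exact ⟨0, by rwa [hval 0 y z]⟩
      rw [hS, Set.mem_setOf_eq] at hmem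
      obtain ⟨a₀, ha₀⟩ := hmem
      rw [hval a₀ y₀ z₀] at ha₀
      rw [hSeq]
      exact lemL _ hc0 y₀ z₀ ha₀
  · -- q has positive degree in a: S contains nonvanishing set of leading coefficient
    have hq0 : q ≠ 0 := fun h => by rw [h] at hdeg; simp at hdeg
    set j := q.natDegree with hj
    have hlc : q.coeff j ≠ 0 := Polynomial.leadingCoeff_ne_zero.mpr hq0
    have hsub : {yz : ℂ × ℂ | MvPolynomial.eval ![yz.1, yz.2] (q.coeff j) ≠ 0} ⊆ S := by
      rintro ⟨y, z⟩ hyz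
      simp only [Set.mem_setOf_eq] at hyz
      set qyz := q.map (MvPolynomial.eval ![y, z]) with hqyz
      have hcoeff : qyz.coeff j ≠ 0 := by simpa [hqyz, Polynomial.coeff_map] using hyz
      have hdz : 0 < qyz.degree := lt_of_lt_of_le (by exact_mod_cast hdeg)
        (Polynomial.le_degree_of_ne_zero hcoeff)
      obtain ⟨a, ha⟩ := Complex.exists_root hdz
      rw [hS]
      exact ⟨a, by rw [key a y z]; exact ha⟩
    intro hc
    exact lemM _ hlc (hc.mono hsub)
end

section
/- There is no polynomial p in three variables a, y, z with complex coefficients (formally, no p : MvPolynomial (Fin 3) ℂ) such that for all y z : ℂ, (y = 0 ∧ z = 0) if and only if (∃ a : ℂ, the evaluation of p at (a, y, z) equals 0). -/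
open Polynomial

theorem no_existential_form_for_origin :
    ¬ ∃ p : MvPolynomial (Fin 3) ℂ,
        ∀ y z : ℂ, (y = 0 ∧ z = 0) ↔ (∃ a : ℂ, MvPolynomial.eval ![a, y, z] p = 0) := by
  rintro ⟨p, hp⟩
  obtain ⟨a₀, ha₀⟩ := (hp 0 0).mp ⟨rfl, rfl⟩
  set f : ℂ →+* Polynomial (Polynomial ℂ) :=
    (Polynomial.C : Polynomial ℂ →+* Polynomial (Polynomial ℂ)).comp Polynomial.C with hf
  set g : Fin 3 → Polynomial (Polynomial ℂ) :=
    ![Polynomial.C (Polynomial.C a₀), Polynomial.C Polynomial.X, Polynomial.X] with hg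
  set q : Polynomial (Polynomial ℂ) := MvPolynomial.eval₂ f g p with hq
  have key : ∀ y z : ℂ,
      Polynomial.eval z (q.map (Polynomial.evalRingHom y)) = MvPolynomial.eval ![a₀, y, z] p := by
    intro y z
    set φ : Polynomial (Polynomial ℂ) →+* ℂ :=
      (Polynomial.evalRingHom z).comp (Polynomial.mapRingHom (Polynomial.evalRingHom y)) with hφ
    have h1 := MvPolynomial.eval₂_comp_left φ f g p
    have h2 : φ.comp f = RingHom.id ℂ := by ext c; simp [hφ, hf]
    have h3 : φ ∘ g = ![a₀, y, z] := by
      funext i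
      fin_cases i <;> simp [hφ, hg]
    rw [h2, h3, MvPolynomial.eval₂_id] at h1
    simpa [hφ] using h1
  -- F y z ≠ 0 for (y,z) ≠ (0,0)
  have hne : ∀ y z : ℂ, ¬ (y = 0 ∧ z = 0) →
      Polynomial.eval z (q.map (Polynomial.evalRingHom y)) ≠ 0 := by
    intro y z h hz
    exact h ((hp y z).mpr ⟨a₀, (key y z) ▸ hz⟩)
  have hzero : Polynomial.eval (0 : ℂ) (q.map (Polynomial.evalRingHom (0 : ℂ))) = 0 := by
    rw [key]; exact ha₀
  have hq0 : q ≠ 0 := by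
    intro h
    exact hne 0 1 (by simp) (by simp [h])
  by_cases hd : q.natDegree = 0
  · -- q is a constant polynomial in Z
    obtain ⟨c, hc⟩ := Polynomial.natDegree_eq_zero.mp hd
    rw [← hc] at hzero
    refine hne 0 1 (by simp) ?_
    rw [← hc]
    simpa using hzero
  · -- q has Z-degree ≥ 1; pick y₀ ≠ 0 not killing the leading coefficient
    have hL : q.leadingCoeff ≠ 0 := Polynomial.leadingCoeff_ne_zero.mpr hq0
    have : ∃ y₀ : ℂ, y₀ ≠ 0 ∧ Polynomial.eval y₀ q.leadingCoeff ≠ 0 := by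
      by_contra h
      push_neg at h
      apply hL
      apply Polynomial.eq_zero_of_infinite_isRoot
      apply Set.Infinite.mono (s := {x : ℂ | x ≠ 0})
      · intro x hx; exact h x hx
      · exact Set.infinite_of_finite_compl (by simp)
    obtain ⟨y₀, hy₀, hLy₀⟩ := this
    have hdeg : (q.map (Polynomial.evalRingHom y₀)).degree = q.degree := by
      apply Polynomial.degree_map_eq_of_leadingCoeff_ne_zero
      simpa using hLy₀
    have : (q.map (Polynomial.evalRingHom y₀)).degree ≠ 0 := by
      rw [hdeg]
      intro h
      exact hd (Polynomial.natDegree_eq_zero_iff_degree_le_zero.mpr h.le)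
    obtain ⟨z₀, hz₀⟩ := Complex.isAlgClosed.exists_root _ this
    exact hne y₀ z₀ (fun h => hy₀ h.1) hz₀
end

section
/- Let m be a positive natural number and let p be a polynomial with complex coefficients in the variables a₁, …, a_m, y, z (formally, p : MvPolynomial (Fin m ⊕ Fin 2) ℂ), and let S = { (y, z) : ℂ × ℂ | ∃ a : Fin m → ℂ, the evaluation of p at (a, y, z) equals 0 }. Then S is either empty or uncountable (i.e., S = ∅ ∨ ¬ S.Countable). -/
open MvPolynomial Polynomial

/-- Evaluating `bind₁` over the base ring. -/
lemma eval_bind₁' {σ τ : Type*} (s : τ → ℂ) (g : σ → MvPolynomial τ ℂ)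
    (φ : MvPolynomial σ ℂ) :
    MvPolynomial.eval s (MvPolynomial.bind₁ g φ)
      = MvPolynomial.eval (fun i => MvPolynomial.eval s (g i)) φ := by
  simpa using MvPolynomial.eval₂Hom_bind₁ (RingHom.id ℂ) s g φ

/-- A nonzero `MvPolynomial (Fin 1) ℂ` vanishes on only finitely many values. -/
lemma finite_zeros_fin1 (c : MvPolynomial (Fin 1) ℂ) (hc : c ≠ 0) :
    {z : ℂ | MvPolynomial.eval ![z] c = 0}.Finite := by
  set c' : Polynomial ℂ := MvPolynomial.aeval (fun _ : Fin 1 => Polynomial.X) c with hc'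
  have hinj : Function.Injective
      (MvPolynomial.aeval (fun _ : Fin 1 => Polynomial.X) :
        MvPolynomial (Fin 1) ℂ →ₐ[ℂ] Polynomial ℂ) := by
    intro u v huv
    have h0 : ∀ w : MvPolynomial (Fin 1) ℂ,
        Polynomial.aeval (R := ℂ) (MvPolynomial.X (0 : Fin 1))
          (MvPolynomial.aeval (fun _ : Fin 1 => Polynomial.X) w) = w := by
      intro w
      have hcomp : ((Polynomial.aeval (R := ℂ) (MvPolynomial.X (0 : Fin 1)) :
            Polynomial ℂ →ₐ[ℂ] MvPolynomial (Fin 1) ℂ).comp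
          (MvPolynomial.aeval (fun _ : Fin 1 => Polynomial.X)))
          = (AlgHom.id ℂ (MvPolynomial (Fin 1) ℂ)) := by
        refine MvPolynomial.algHom_ext fun i => ?_
        fin_cases i
        simp
      have := DFunLike.congr_fun hcomp w
      simpa using this
    have := congrArg (Polynomial.aeval (R := ℂ) (MvPolynomial.X (R := ℂ) (0 : Fin 1))) huv
    simpa [h0] using this
  have hc'0 : c' ≠ 0 := by
    intro h
    exact hc (hinj (by simpa [hc'] using h))
  have heval : ∀ z : ℂ, Polynomial.eval z c' = MvPolynomial.eval ![z] c := by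
    intro z
    have hcomp : ((Polynomial.aeval z : Polynomial ℂ →ₐ[ℂ] ℂ).comp
        (MvPolynomial.aeval (fun _ : Fin 1 => Polynomial.X)))
        = MvPolynomial.aeval (![z] : Fin 1 → ℂ) := by
      refine MvPolynomial.algHom_ext fun i => ?_
      fin_cases i
      simp
    have h2 := DFunLike.congr_fun hcomp c
    simp only [AlgHom.coe_comp, Function.comp_apply] at h2
    calc Polynomial.eval z c'
        = Polynomial.aeval z c' := (congrFun (Polynomial.coe_aeval_eq_eval z) c').symm
      _ = MvPolynomial.aeval (![z] : Fin 1 → ℂ) c := by rw [hc']; exact h2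
      _ = MvPolynomial.eval ![z] c := by
          exact DFunLike.congr_fun
            (MvPolynomial.coe_aeval_eq_eval (![z] : Fin 1 → ℂ)) c
  have : {z : ℂ | MvPolynomial.eval ![z] c = 0} ⊆ {z : ℂ | c'.IsRoot z} := by
    intro z hz
    simp only [Set.mem_setOf_eq] at hz ⊢
    rw [Polynomial.IsRoot, heval z, hz]
  exact (Polynomial.finite_setOf_isRoot hc'0).subset this

theorem exists_block_proj_zero_set_empty_or_uncountable (m : ℕ) (hm : 0 < m)
    (p : MvPolynomial (Fin m ⊕ Fin 2) ℂ) (S : Set (ℂ × ℂ))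
    (hS : S = {yz : ℂ × ℂ | ∃ a : Fin m → ℂ,
        MvPolynomial.eval (Sum.elim a ![yz.1, yz.2]) p = 0}) :
    S = ∅ ∨ ¬ S.Countable := by
  rcases Set.eq_empty_or_nonempty S with h | ⟨⟨y₀, z₀⟩, hmem⟩
  · exact Or.inl h
  right
  intro hcnt
  rw [hS] at hmem
  obtain ⟨a₀, ha₀⟩ := hmem
  simp only [Set.mem_setOf_eq] at ha₀
  -- the two-variable specialization
  set q : MvPolynomial (Fin 2) ℂ :=
    MvPolynomial.bind₁
      (Sum.elim (fun i => MvPolynomial.C (a₀ i)) MvPolynomial.X) p with hq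
  have hqe : ∀ y z : ℂ,
      MvPolynomial.eval ![y, z] q = MvPolynomial.eval (Sum.elim a₀ ![y, z]) p := by
    intro y z
    have hfun : (fun i => MvPolynomial.eval ![y, z]
          (Sum.elim (fun i => MvPolynomial.C (a₀ i)) MvPolynomial.X i))
        = Sum.elim a₀ ![y, z] := by
      funext i
      cases i <;> simp
    rw [hq, eval_bind₁', hfun]
  have hqS : ∀ y z : ℂ, MvPolynomial.eval ![y, z] q = 0 → (y, z) ∈ S := by
    intro y z h
    rw [hS]
    exact ⟨a₀, by rw [← hqe]; exact h⟩
  have hq₀ : MvPolynomial.eval ![y₀, z₀] q = 0 := by rw [hqe]; exact ha₀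
  -- view q as a polynomial in the first variable
  set r : Polynomial (MvPolynomial (Fin 1) ℂ) := MvPolynomial.finSuccEquiv ℂ 1 q with hr
  have heval : ∀ y z : ℂ,
      MvPolynomial.eval ![y, z] q
        = Polynomial.eval y (r.map (MvPolynomial.eval ![z])) := by
    intro y z
    have := MvPolynomial.eval_eq_eval_mv_eval' (![z] : Fin 1 → ℂ) y q
    simpa [hr] using this
  have hCuncnt : ¬ (Set.univ : Set ℂ).Countable := by
    have : Uncountable ℂ := Complex.ofReal_injective.uncountable
    exact Set.not_countable_univ
  by_cases hdeg : r.natDegree = 0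
  · -- q does not involve the first variable; the whole line ℂ × {z₀} lies in S
    have hline : ∀ y : ℂ, (y, z₀) ∈ S := by
      intro y
      apply hqS
      rw [heval y z₀]
      have h0 := hq₀
      rw [heval y₀ z₀] at h0
      obtain ⟨c, hc⟩ := Polynomial.natDegree_eq_zero.mp hdeg
      rw [← hc] at h0 ⊢
      simpa using (by simpa using h0)
    have : (Set.univ : Set ℂ).Countable := by
      have hsub : (Set.univ : Set ℂ) ⊆ Prod.fst '' S := by
        intro y _
        exact ⟨(y, z₀), hline y, rfl⟩
      exact Set.Countable.mono hsub (hcnt.image _)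
    exact hCuncnt this
  · -- positive degree in y: for all but finitely many z there is a root in y
    have hr0 : r ≠ 0 := fun h => hdeg (by rw [h]; simp)
    have hlc : r.leadingCoeff ≠ 0 := Polynomial.leadingCoeff_ne_zero.mpr hr0
    have hZfin : {z : ℂ | MvPolynomial.eval ![z] r.leadingCoeff = 0}.Finite :=
      finite_zeros_fin1 _ hlc
    have hgood : ∀ z : ℂ, MvPolynomial.eval ![z] r.leadingCoeff ≠ 0 →
        ∃ y : ℂ, (y, z) ∈ S := by
      intro z hz
      have hdegmap : (r.map (MvPolynomial.eval ![z])).degree = r.degree :=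
        Polynomial.degree_map_eq_of_leadingCoeff_ne_zero _ hz
      have hpos : 0 < (r.map (MvPolynomial.eval ![z])).degree := by
        rw [hdegmap, Polynomial.degree_eq_natDegree hr0]
        exact_mod_cast Nat.pos_of_ne_zero hdeg
      obtain ⟨y, hy⟩ := Complex.exists_root hpos
      exact ⟨y, hqS y z (by rw [heval]; exact hy)⟩
    have hsub : {z : ℂ | MvPolynomial.eval ![z] r.leadingCoeff = 0}ᶜ ⊆ Prod.snd '' S := by
      intro z hz
      obtain ⟨y, hy⟩ := hgood z hz
      exact ⟨(y, z), hy, rfl⟩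
    have : (Set.univ : Set ℂ).Countable := by
      have hsub2 : (Set.univ : Set ℂ)
          ⊆ {z : ℂ | MvPolynomial.eval ![z] r.leadingCoeff = 0} ∪ Prod.snd '' S := by
        intro z _
        by_cases h : MvPolynomial.eval ![z] r.leadingCoeff = 0
        · exact Or.inl h
        · exact Or.inr (hsub h)
      exact Set.Countable.mono hsub2 (hZfin.countable.union (hcnt.image _))
    exact hCuncnt this
end

section
/- Let d, e, f be positive natural numbers and let t : Fin d → Fin e → ℝ and u : Fin d → Fin f → ℝ be families of real numbers (the evaluated terms of a formula in disjunctive normal form). Then the disjunction ∃ i : Fin d, ((∀ j : Fin e, t i j = 0) ∧ (∀ k : Fin f, u i k ≠ 0)) holds if and only if there exists r : ℝ such that ∏_{i : Fin d} (∑_{j : Fin e} (t i j)^2 + (1 − r · ∏_{k : Fin f} u i k)^2) = 0. -/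
theorem boolean_elim_E_over_R (d e f : ℕ) (hd : 0 < d) (he : 0 < e) (hf : 0 < f)
    (t : Fin d → Fin e → ℝ) (u : Fin d → Fin f → ℝ) :
    (∃ i : Fin d, (∀ j : Fin e, t i j = 0) ∧ (∀ k : Fin f, u i k ≠ 0)) ↔
    (∃ r : ℝ,
      ∏ i : Fin d,
        ((∑ j : Fin e, (t i j) ^ 2) + (1 - r * ∏ k : Fin f, u i k) ^ 2) = 0) := by
  constructor
  · rintro ⟨i, ht, hu⟩
    have hP : (∏ k : Fin f, u i k) ≠ 0 := Finset.prod_ne_zero_iff.2 fun k _ => hu k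
    refine ⟨(∏ k : Fin f, u i k)⁻¹, Finset.prod_eq_zero (Finset.mem_univ i) ?_⟩
    rw [inv_mul_cancel₀ hP]
    simp [ht]
  · rintro ⟨r, hr⟩
    obtain ⟨i, -, hi⟩ := Finset.prod_eq_zero_iff.1 hr
    have h1 : (∑ j : Fin e, (t i j) ^ 2) = 0 ∧ (1 - r * ∏ k : Fin f, u i k) ^ 2 = 0 := by
      constructor <;> nlinarith [Finset.sum_nonneg fun j (_ : j ∈ Finset.univ) => sq_nonneg (t i j),
        sq_nonneg (1 - r * ∏ k : Fin f, u i k)]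
    obtain ⟨hs, hq⟩ := h1
    refine ⟨i, fun j => ?_, fun k => ?_⟩
    · have := (Finset.sum_eq_zero_iff_of_nonneg fun j _ => sq_nonneg (t i j)).1 hs j
        (Finset.mem_univ j)
      exact pow_eq_zero_iff two_ne_zero |>.1 this
    · have h2 : r * ∏ k : Fin f, u i k = 1 := by nlinarith
      have hP : (∏ k : Fin f, u i k) ≠ 0 := by
        intro h; rw [h, mul_zero] at h2; exact one_ne_zero h2.symm
      exact fun h => hP (Finset.prod_eq_zero (Finset.mem_univ k) h)
end

section
/- Let e, f be positive natural numbers and let t : Fin e → ℝ and u : Fin f → ℝ. Then ((∃ j : Fin e, t j = 0) ∨ (∃ k : Fin f, u k > 0)) if and only if there exists s : ℝ such that (∏_{j : Fin e} t j) · (∏_{k : Fin f} (1 − s^2 · u k)) = 0. -/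
theorem clause_elim_E_over_R (e f : ℕ) (he : 0 < e) (hf : 0 < f)
    (t : Fin e → ℝ) (u : Fin f → ℝ) :
    ((∃ j : Fin e, t j = 0) ∨ (∃ k : Fin f, u k > 0)) ↔
    (∃ s : ℝ, (∏ j : Fin e, t j) * (∏ k : Fin f, (1 - s ^ 2 * u k)) = 0) := by
  constructor
  · rintro (⟨j, hj⟩ | ⟨k, hk⟩)
    · exact ⟨0, by rw [Finset.prod_eq_zero (Finset.mem_univ j) hj, zero_mul]⟩
    · refine ⟨1 / Real.sqrt (u k), mul_eq_zero.2 (Or.inr ?_)⟩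
      apply Finset.prod_eq_zero (Finset.mem_univ k)
      rw [div_pow, one_pow, Real.sq_sqrt hk.le, one_div,
        inv_mul_cancel₀ (ne_of_gt hk), sub_self]
  · rintro ⟨s, hs⟩
    rcases mul_eq_zero.1 hs with h | h
    · obtain ⟨j, _, hj⟩ := Finset.prod_eq_zero_iff.1 h
      exact Or.inl ⟨j, hj⟩
    · obtain ⟨k, _, hk⟩ := Finset.prod_eq_zero_iff.1 h
      have h1 : s ^ 2 * u k = 1 := by linarith
      refine Or.inr ⟨k, ?_⟩
      nlinarith [sq_nonneg s]
end

section
/- Let d, e, f be positive natural numbers and let t : Fin d → Fin e → ℝ and u : Fin d → Fin f → ℝ be families of real numbers (the evaluated terms of a formula in conjunctive normal form with order inequalities). Then the conjunction ∀ i : Fin d, ((∃ j : Fin e, t i j = 0) ∨ (∃ k : Fin f, u i k > 0)) holds if and only if there exists r : Fin d → ℝ such that ∑_{i : Fin d} ((∏_{j : Fin e} t i j) · (∏_{k : Fin f} (1 − (r i)^2 · u i k)))^2 = 0. -/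
/-! The factor `1 - r² a` has a real root `r` exactly when `a > 0`, so a conjunct
`(∃ j, t j = 0) ∨ (∃ k, u k > 0)` holds iff `(∏ j, t j) * ∏ k, (1 - r² u k)` vanishes for some
real `r`. Choosing one such `r i` per conjunct, the conjunction becomes the simultaneous vanishing
of finitely many reals, i.e. of the sum of their squares. -/

open Finset

theorem Finset.sum_sq_eq_zero_iff {ι R : Type*} [Semiring R] [LinearOrder R]
    [IsStrictOrderedRing R] [ExistsAddOfLE R] (s : Finset ι) (f : ι → R) :
    ∑ i ∈ s, f i ^ 2 = 0 ↔ ∀ i ∈ s, f i = 0 := by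
  simp_rw [sq, sum_mul_self_eq_zero_iff]

theorem Real.exists_one_sub_sq_mul_eq_zero_iff {a : ℝ} : (∃ r : ℝ, 1 - r ^ 2 * a = 0) ↔ 0 < a := by
  constructor
  · rintro ⟨r, hr⟩
    exact pos_of_mul_pos_right (by linarith) (sq_nonneg r)
  · intro ha
    refine ⟨√a⁻¹, ?_⟩
    rw [Real.sq_sqrt (inv_nonneg.mpr ha.le), inv_mul_cancel₀ ha.ne', sub_self]

theorem Real.exists_prod_mul_prod_one_sub_sq_mul_eq_zero_iff {ι κ : Type*} [Fintype ι]
    [Fintype κ] (t : ι → ℝ) (u : κ → ℝ) :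
    (∃ r : ℝ, (∏ j, t j) * ∏ k, (1 - r ^ 2 * u k) = 0) ↔ (∃ j, t j = 0) ∨ ∃ k, 0 < u k := by
  simp only [mul_eq_zero, prod_eq_zero_iff, mem_univ, true_and]
  simp_rw [← Real.exists_one_sub_sq_mul_eq_zero_iff, exists_or, exists_const]
  rw [exists_comm]

theorem boolean_elim_Ed_over_R_general (d e f : ℕ)
    (t : Fin d → Fin e → ℝ) (u : Fin d → Fin f → ℝ) :
    (∀ i : Fin d, (∃ j : Fin e, t i j = 0) ∨ (∃ k : Fin f, u i k > 0)) ↔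
    (∃ r : Fin d → ℝ,
      ∑ i : Fin d,
        ((∏ j : Fin e, t i j) * (∏ k : Fin f, (1 - (r i) ^ 2 * u i k))) ^ 2 = 0) := by
  simp only [sum_sq_eq_zero_iff, mem_univ, true_imp_iff, gt_iff_lt,
    ← Real.exists_prod_mul_prod_one_sub_sq_mul_eq_zero_iff]
  exact Classical.skolem

theorem boolean_elim_Ed_over_R (d e f : ℕ) (hd : 0 < d) (he : 0 < e) (hf : 0 < f)
    (t : Fin d → Fin e → ℝ) (u : Fin d → Fin f → ℝ) :
    (∀ i : Fin d, (∃ j : Fin e, t i j = 0) ∨ (∃ k : Fin f, u i k > 0)) ↔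
    (∃ r : Fin d → ℝ,
      ∑ i : Fin d,
        ((∏ j : Fin e, t i j) * (∏ k : Fin f, (1 - (r i) ^ 2 * u i k))) ^ 2 = 0) :=
  boolean_elim_Ed_over_R_general d e f t u
end

section
/- Let d, e, f be positive natural numbers and let t : Fin d → Fin e → ℝ and u : Fin d → Fin f → ℝ be families of real numbers (the evaluated terms of a formula in conjunctive normal form with order inequalities). Then the conjunction ∀ i : Fin d, ((∃ j : Fin e, t i j = 0) ∨ (∃ k : Fin f, u i k > 0)) holds if and only if for every r : ℝ there exists s : ℝ such that (1 − s · ∏_{i : Fin d} (r − (i+1))) · (∑_{i : Fin d} (∏_{h : Fin d, h ≠ i} (r − (h+1))) · (∏_{j : Fin e} t i j) · (∏_{k : Fin f} (1 − s^2 · u i k))) = 0, where i+1 and h+1 denote the natural numbers 1, …, d cast into ℝ. -/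
theorem boolean_elim_AE_over_R (d e f : ℕ) (hd : 0 < d) (he : 0 < e) (hf : 0 < f)
    (t : Fin d → Fin e → ℝ) (u : Fin d → Fin f → ℝ) :
    (∀ i : Fin d, (∃ j : Fin e, t i j = 0) ∨ (∃ k : Fin f, u i k > 0)) ↔
    (∀ r : ℝ, ∃ s : ℝ,
      (1 - s * ∏ i : Fin d, (r - (((i : ℕ) + 1 : ℕ) : ℝ))) *
        (∑ i : Fin d,
          (∏ h ∈ Finset.univ.erase i, (r - (((h : ℕ) + 1 : ℕ) : ℝ))) *
            (∏ j : Fin e, t i j) * (∏ k : Fin f, (1 - s ^ 2 * u i k))) = 0) := by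
  constructor
  · intro H r
    by_cases hr : (∏ i : Fin d, (r - (((i : ℕ) + 1 : ℕ) : ℝ))) = 0
    · obtain ⟨i, -, hi⟩ := Finset.prod_eq_zero_iff.mp hr
      have key : ∀ s : ℝ, (∏ k : Fin f, (1 - s ^ 2 * u i k)) = 0 ∨
          (∏ j : Fin e, t i j) = 0 →
          (1 - s * ∏ i : Fin d, (r - (((i : ℕ) + 1 : ℕ) : ℝ))) *
          (∑ i' : Fin d,
            (∏ h ∈ Finset.univ.erase i', (r - (((h : ℕ) + 1 : ℕ) : ℝ))) *
              (∏ j : Fin e, t i' j) * (∏ k : Fin f, (1 - s ^ 2 * u i' k))) = 0 := by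
        intro s hcase
        have hsum : (∑ i' : Fin d,
            (∏ h ∈ Finset.univ.erase i', (r - (((h : ℕ) + 1 : ℕ) : ℝ))) *
              (∏ j : Fin e, t i' j) * (∏ k : Fin f, (1 - s ^ 2 * u i' k))) = 0 := by
          apply Finset.sum_eq_zero
          intro i' _
          by_cases hii : i' = i
          · subst hii
            rcases hcase with h | h
            · rw [h, mul_zero]
            · rw [h, mul_zero, zero_mul]
          · have : (∏ h ∈ Finset.univ.erase i', (r - (((h : ℕ) + 1 : ℕ) : ℝ))) = 0 :=
              Finset.prod_eq_zero (Finset.mem_erase.mpr ⟨Ne.symm hii, Finset.mem_univ i⟩) hi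
            rw [this, zero_mul, zero_mul]
        rw [hsum, mul_zero]
      rcases H i with ⟨j, hj⟩ | ⟨k, hk⟩
      · exact ⟨0, key 0 (Or.inr (Finset.prod_eq_zero (Finset.mem_univ j) hj))⟩
      · refine ⟨Real.sqrt (u i k)⁻¹, key _ (Or.inl ?_)⟩
        apply Finset.prod_eq_zero (Finset.mem_univ k)
        rw [Real.sq_sqrt (by positivity), inv_mul_cancel₀ (ne_of_gt hk)]
        ring
    · refine ⟨(∏ i : Fin d, (r - (((i : ℕ) + 1 : ℕ) : ℝ)))⁻¹, ?_⟩
      rw [inv_mul_cancel₀ hr, sub_self, zero_mul]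
  · intro H i
    by_contra hcon
    push_neg at hcon
    obtain ⟨h1, h2⟩ := hcon
    obtain ⟨s, hs⟩ := H (((i : ℕ) + 1 : ℕ) : ℝ)
    have hzero : (∏ h : Fin d, ((((i : ℕ) + 1 : ℕ) : ℝ) - (((h : ℕ) + 1 : ℕ) : ℝ))) = 0 :=
      Finset.prod_eq_zero (Finset.mem_univ i) (by ring)
    rw [hzero, mul_zero, sub_zero, one_mul] at hs
    have hsum : (∑ i' : Fin d,
        (∏ h ∈ Finset.univ.erase i', ((((i : ℕ) + 1 : ℕ) : ℝ) - (((h : ℕ) + 1 : ℕ) : ℝ))) *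
          (∏ j : Fin e, t i' j) * (∏ k : Fin f, (1 - s ^ 2 * u i' k))) =
        (∏ h ∈ Finset.univ.erase i, ((((i : ℕ) + 1 : ℕ) : ℝ) - (((h : ℕ) + 1 : ℕ) : ℝ))) *
          (∏ j : Fin e, t i j) * (∏ k : Fin f, (1 - s ^ 2 * u i k)) := by
      apply Finset.sum_eq_single
      · intro b _ hb
        have : (∏ h ∈ Finset.univ.erase b, ((((i : ℕ) + 1 : ℕ) : ℝ) - (((h : ℕ) + 1 : ℕ) : ℝ))) = 0 :=
          Finset.prod_eq_zero (Finset.mem_erase.mpr ⟨hb.symm, Finset.mem_univ i⟩) (by ring)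
        rw [this, zero_mul, zero_mul]
      · intro h; exact absurd (Finset.mem_univ i) h
    rw [hsum] at hs
    have hp1 : (∏ h ∈ Finset.univ.erase i, ((((i : ℕ) + 1 : ℕ) : ℝ) - (((h : ℕ) + 1 : ℕ) : ℝ))) ≠ 0 := by
      apply Finset.prod_ne_zero_iff.mpr
      intro h hh
      have hne : (h : Fin d) ≠ i := Finset.ne_of_mem_erase hh
      have : ((h : ℕ) : ℝ) ≠ ((i : ℕ) : ℝ) := by
        exact_mod_cast fun hc => hne (Fin.ext (by exact_mod_cast hc))
      intro hc
      apply this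
      push_cast at hc ⊢
      linarith
    have hp2 : (∏ j : Fin e, t i j) ≠ 0 := Finset.prod_ne_zero_iff.mpr fun j _ => h1 j
    have hp3 : (∏ k : Fin f, (1 - s ^ 2 * u i k)) > 0 := by
      apply Finset.prod_pos
      intro k _
      have := h2 k
      nlinarith [sq_nonneg s]
    exact (mul_ne_zero (mul_ne_zero hp1 hp2) (ne_of_gt hp3)) hs
end

section
/- For all real numbers y and z, (y > 0 ∧ z > 0) holds if and only if there exists r : ℝ such that (r^2 · y · z − z − 1)^2 = z. -/
theorem pecker_simplified (y z : ℝ) :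
    (y > 0 ∧ z > 0) ↔ ∃ r : ℝ, (r ^ 2 * y * z - z - 1) ^ 2 = z := by
  constructor
  · rintro ⟨hy, hz⟩
    have hs : Real.sqrt z ≥ 0 := Real.sqrt_nonneg z
    have hnum : z + 1 + Real.sqrt z ≥ 0 := by linarith
    have hyz : y * z > 0 := mul_pos hy hz
    refine ⟨Real.sqrt ((z + 1 + Real.sqrt z) / (y * z)), ?_⟩
    have h1 : Real.sqrt ((z + 1 + Real.sqrt z) / (y * z)) ^ 2
        = (z + 1 + Real.sqrt z) / (y * z) :=
      Real.sq_sqrt (div_nonneg hnum hyz.le)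
    rw [h1]
    have h2 : (z + 1 + Real.sqrt z) / (y * z) * y * z = z + 1 + Real.sqrt z := by
      field_simp
    rw [h2]
    have : z + 1 + Real.sqrt z - z - 1 = Real.sqrt z := by ring
    rw [this, Real.sq_sqrt hz.le]
  · rintro ⟨r, hr⟩
    have hz : z ≥ 0 := hr ▸ sq_nonneg _
    have hz0 : z ≠ 0 := by
      intro h
      rw [h] at hr
      norm_num at hr
    have hzpos : z > 0 := lt_of_le_of_ne hz (Ne.symm hz0)
    refine ⟨?_, hzpos⟩
    by_contra hy
    push_neg at hy
    have h1 : r ^ 2 * y * z ≤ 0 := by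
      nlinarith [mul_nonneg (sq_nonneg r) hz, sq_nonneg r]
    nlinarith [sq_nonneg (z + 1), sq_nonneg r]
end

section
/- Let d, e, f be positive natural numbers and let t : Fin d → Fin e → ℚ and u : Fin d → Fin f → ℚ be families of rational numbers (the evaluated terms of a formula in conjunctive normal form with order inequalities). Then the conjunction ∀ i : Fin d, ((∃ j : Fin e, t i j = 0) ∨ (∃ k : Fin f, u i k > 0)) holds if and only if there exists v : Fin d → Fin 3 → ℚ such that, writing V i = (v i 0)^2 + (v i 1)^2 + (v i 2)^2, one has ∑_{i : Fin d} ((∏_{j : Fin e} t i j) · (∏_{k : Fin f} (1 − (u i k)·(V i)) · (1 − 2·(u i k)·(V i))))^2 = 0. -/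
/-!
A rational `u` is positive iff `(1 - u V) (1 - 2 u V) = 0` for some sum `V` of three rational
squares: take `V = 1 / (2u)` or `V = 1 / u`. One of them is a sum of three squares since, writing
`1 / (2u) = m k²` with `m` squarefree, one of `m`, `2m` is `1` or `2 mod 4`, and such an `m` is a
sum of three rational squares. For the latter, Dirichlet's theorem and quadratic reciprocity give a
prime `p ≡ 1 mod 4` with `p ≡ -1 mod m` and `(m / p) = 1`; a pigeonhole argument on a box yields a
nontrivial solution of `x² + p y² - m z² ∈ {0, p m}`, hence `m = d² + p e²` over `ℚ`, and `p` is a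
sum of two squares. A sum of squares vanishes iff every clause term does, and each clause gets its
own witness.
-/

theorem exists_ne_zero_natAbs_lt_map_eq_zero {ι G : Type*} [Fintype ι] [AddCommGroup G]
    [Fintype G] (F : (ι → ℤ) →+ G) (B : ι → ℕ) (hcard : Fintype.card G < ∏ i, B i) :
    ∃ x : ι → ℤ, x ≠ 0 ∧ (∀ i, (x i).natAbs < B i) ∧ F x = 0 := by
  classical
  let f : ((i : ι) → Fin (B i)) → G := fun a => F fun i => (a i : ℤ)
  obtain ⟨a, b, hab, hfab⟩ := Fintype.exists_ne_map_eq_of_card_lt f (by simpa using hcard)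
  refine ⟨fun i => (a i : ℤ) - b i, fun h => hab ?_, fun i => ?_, ?_⟩
  · funext i
    exact Fin.ext (by simpa [sub_eq_zero] using congrFun h i)
  · have := (a i).isLt
    have := (b i).isLt
    change ((a i : ℤ) - b i).natAbs < B i
    omega
  · change F ((fun i => (a i : ℤ)) - fun i => (b i : ℤ)) = 0
    rw [map_sub, sub_eq_zero]
    exact hfab

theorem eq_zero_or_eq_of_dvd_of_neg_lt_of_lt_two_mul {n Q : ℤ} (hn : 0 < n) (hQ : n ∣ Q)
    (hlo : -n < Q) (hhi : Q < 2 * n) : Q = 0 ∨ Q = n := by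
  obtain ⟨k, rfl⟩ := hQ
  have h1 : -1 < k := lt_of_mul_lt_mul_left (by linarith) hn.le
  have h2 : k < 2 := lt_of_mul_lt_mul_left (by linarith) hn.le
  obtain rfl | rfl : k = 0 ∨ k = 1 := by omega
  all_goals simp

theorem sq_lt_of_natAbs_le_sqrt {n : ℕ} (hn : Squarefree n) (h2 : 2 ≤ n) {x : ℤ}
    (hx : x.natAbs ≤ n.sqrt) : x ^ 2 < n := by
  have hle : x.natAbs ^ 2 ≤ n := (Nat.pow_le_pow_left hx 2).trans n.sqrt_le'
  have hne : x.natAbs ^ 2 ≠ n := by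
    rintro rfl
    have : x.natAbs = 1 := Nat.isUnit_iff.1 (hn _ (by rw [sq]))
    simp [this] at h2
  rw [← Int.natAbs_sq]
  exact_mod_cast lt_of_le_of_ne hle hne

theorem mul_lt_sqrt_succ_mul_sqrt_succ_mul_sqrt_succ (a b : ℕ) :
    a * b < ((a * b).sqrt + 1) * (a.sqrt + 1) * (b.sqrt + 1) := by
  refine lt_of_pow_lt_pow_left₀ 2 (Nat.zero_le _) ?_
  calc (a * b) ^ 2 = (a * b) * a * b := by ring
    _ < ((a * b).sqrt + 1) ^ 2 * (a.sqrt + 1) ^ 2 * (b.sqrt + 1) ^ 2 := by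
      have hab := Nat.lt_succ_sqrt' (a * b)
      have ha := Nat.lt_succ_sqrt' a
      have hb := Nat.lt_succ_sqrt' b
      exact mul_lt_mul'' (mul_lt_mul'' hab ha (Nat.zero_le _) (Nat.zero_le _)) hb
        (Nat.zero_le _) (Nat.zero_le _)
    _ = _ := by ring

theorem exists_ternary_eq_zero_or_eq_mul {m p : ℕ} (hm : Squarefree m) (hm2 : 2 ≤ m)
    (hp : p.Prime) (hpm : ¬p ∣ m) (hmp : m ∣ p + 1) {ρ : ZMod p} (hρ : ρ ^ 2 = m) :
    ∃ x y z : ℤ, ¬(x = 0 ∧ y = 0 ∧ z = 0) ∧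
      (x ^ 2 + p * y ^ 2 - m * z ^ 2 = 0 ∨ x ^ 2 + p * y ^ 2 - m * z ^ 2 = p * m) := by
  have : NeZero m := ⟨by omega⟩
  have : NeZero p := ⟨hp.ne_zero⟩
  have hcop : p.Coprime m := (Nat.Prime.coprime_iff_not_dvd hp).2 hpm
  let F : (Fin 3 → ℤ) →+ ZMod m × ZMod p :=
    AddMonoidHom.mk' (fun w => ((w 0 - w 1 : ℤ), (w 0 - ρ * w 2))) fun v w => by
      ext <;> simp only [Pi.add_apply, Int.cast_add, Int.cast_sub, Prod.mk_add_mk] <;> ring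
  obtain ⟨w, hw0, hwB, hFw⟩ := exists_ne_zero_natAbs_lt_map_eq_zero F
    ![(p * m).sqrt + 1, m.sqrt + 1, p.sqrt + 1] <| by
      calc Fintype.card (ZMod m × ZMod p) = p * m := by simp [ZMod.card, mul_comm]
        _ < _ := mul_lt_sqrt_succ_mul_sqrt_succ_mul_sqrt_succ p m
        _ = _ := by simp [Fin.prod_univ_three, mul_right_comm]
  have hxy : ((w 0 : ℤ) : ZMod m) = w 1 := by
    simpa [F, sub_eq_zero] using congrArg Prod.fst hFw
  have hxz : ((w 0 : ℤ) : ZMod p) = ρ * w 2 := by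
    simpa [F, sub_eq_zero] using congrArg Prod.snd hFw
  have hQm : (m : ℤ) ∣ w 0 ^ 2 + p * w 1 ^ 2 - m * w 2 ^ 2 := by
    have hp1 : (p : ZMod m) = -1 := by
      rw [eq_neg_iff_add_eq_zero]
      exact_mod_cast (ZMod.natCast_eq_zero_iff _ _).2 hmp
    rw [← ZMod.intCast_zmod_eq_zero_iff_dvd]
    push_cast
    rw [hxy, hp1, ZMod.natCast_self]
    ring
  have hQp : (p : ℤ) ∣ w 0 ^ 2 + p * w 1 ^ 2 - m * w 2 ^ 2 := by
    rw [← ZMod.intCast_zmod_eq_zero_iff_dvd]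
    push_cast
    rw [hxz, ZMod.natCast_self, mul_pow, hρ]
    ring
  have hx : w 0 ^ 2 < (p * m : ℕ) :=
    sq_lt_of_natAbs_le_sqrt (Nat.squarefree_mul_iff.2 ⟨hcop, hp.squarefree, hm⟩)
      (by nlinarith [hp.two_le]) (Nat.lt_succ_iff.1 (by simpa using hwB 0))
  have hy : w 1 ^ 2 < m :=
    sq_lt_of_natAbs_le_sqrt hm hm2 (Nat.lt_succ_iff.1 (by simpa using hwB 1))
  have hz : w 2 ^ 2 < p := sq_lt_of_natAbs_le_sqrt hp.squarefree hp.two_le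
    (Nat.lt_succ_iff.1 (by simpa using hwB 2))
  refine ⟨w 0, w 1, w 2, fun ⟨h0, h1, h2⟩ => hw0 ?_, ?_⟩
  · ext i; fin_cases i <;> simp [h0, h1, h2]
  · push_cast at hx
    have hp0 : (0 : ℤ) < p := by exact_mod_cast hp.pos
    have hm0 : (0 : ℤ) < m := by omega
    exact eq_zero_or_eq_of_dvd_of_neg_lt_of_lt_two_mul (by positivity)
      ((Nat.isCoprime_iff_coprime.2 hcop).mul_dvd hQp hQm)
      (by nlinarith [sq_nonneg (w 0), sq_nonneg (w 1)]) (by nlinarith [sq_nonneg (w 2)])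

theorem exists_eq_sq_add_mul_sq_of_ternary {K : Type*} [Field K] [LinearOrder K]
    [IsStrictOrderedRing K] {m p x y z : K} (hp : 0 < p) (hxyz : ¬(x = 0 ∧ y = 0 ∧ z = 0))
    (h : x ^ 2 + p * y ^ 2 - m * z ^ 2 = 0 ∨ x ^ 2 + p * y ^ 2 - m * z ^ 2 = p * m) :
    ∃ d e : K, m = d ^ 2 + p * e ^ 2 := by
  rcases h with h | h
  · have hz : z ≠ 0 := by
      rintro rfl
      have hx : x ^ 2 = 0 := by nlinarith [sq_nonneg x, mul_nonneg hp.le (sq_nonneg y)]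
      have hy : p * y ^ 2 = 0 := by nlinarith [sq_nonneg x, mul_nonneg hp.le (sq_nonneg y)]
      exact hxyz ⟨pow_eq_zero_iff two_ne_zero |>.1 hx,
        pow_eq_zero_iff two_ne_zero |>.1 ((mul_eq_zero.1 hy).resolve_left hp.ne'), rfl⟩
    refine ⟨x / z, y / z, ?_⟩
    field_simp
    linear_combination -h
  · -- `m (z² + p) = x² + p y²`, and the norms of `ℚ(√-p)` are multiplicative
    have hzp : z ^ 2 + p ≠ 0 := by positivity
    refine ⟨(x * z - p * y) / (z ^ 2 + p), (y * z + x) / (z ^ 2 + p), ?_⟩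
    field_simp
    linear_combination (-z ^ 2 - p) * h

theorem exists_sq_add_sq_add_sq_of_prime {m p : ℕ} (hm : Squarefree m) (hm2 : 2 ≤ m)
    (hp : p.Prime) (hp4 : p % 4 = 1) (hpm : ¬p ∣ m) (hmp : m ∣ p + 1)
    (hsq : IsSquare (m : ZMod p)) : ∃ a b c : ℚ, a ^ 2 + b ^ 2 + c ^ 2 = m := by
  obtain ⟨ρ, hρ⟩ := hsq
  obtain ⟨x, y, z, hxyz, h⟩ :=
    exists_ternary_eq_zero_or_eq_mul hm hm2 hp hpm hmp (ρ := ρ) (by rw [hρ, sq])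
  obtain ⟨d, e, hde⟩ := exists_eq_sq_add_mul_sq_of_ternary (m := (m : ℚ)) (p := p)
    (x := x) (y := y) (z := z) (by exact_mod_cast hp.pos) (by exact_mod_cast hxyz)
    (by exact_mod_cast h)
  have : Fact p.Prime := ⟨hp⟩
  obtain ⟨r, s, hrs⟩ := Nat.Prime.sq_add_sq (p := p) (by omega)
  refine ⟨d, r * e, s * e, ?_⟩
  rw [hde, ← hrs]
  push_cast
  ring

theorem Nat.exists_prime_gt_natCast_eq_and_natCast_eq {a b : ℕ} [NeZero a] [NeZero b]
    (hab : a.Coprime b) {r : ZMod a} {s : ZMod b} (hr : IsUnit r) (hs : IsUnit s) (N : ℕ) :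
    ∃ p > N, p.Prime ∧ (p : ZMod a) = r ∧ (p : ZMod b) = s := by
  let e := ZMod.chineseRemainder hab
  obtain ⟨p, hpN, hp, hpc⟩ := Nat.forall_exists_prime_gt_and_eq_mod
    (e.symm.toRingHom.isUnit_map ((Prod.isUnit_iff (x := (r, s))).2 ⟨hr, hs⟩)) N
  have hrs : e (p : ZMod (a * b)) = (r, s) := by rw [hpc]; exact e.apply_symm_apply _
  rw [map_natCast] at hrs
  exact ⟨p, hpN, hp, congrArg Prod.fst hrs, congrArg Prod.snd hrs⟩

theorem exists_prime_mod_eight_dvd_add_one {m δ : ℕ} (hm : Odd m) (hδ : Odd δ) (N : ℕ) :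
    ∃ p > N, p.Prime ∧ p % 8 = δ % 8 ∧ m ∣ p + 1 := by
  have : NeZero m := ⟨hm.pos.ne'⟩
  have h8m : Nat.Coprime 8 m := Nat.Coprime.pow_left 3 (Nat.coprime_two_left.2 hm)
  have hδ8 : IsUnit (δ : ZMod 8) :=
    (ZMod.isUnit_iff_coprime δ 8).2 (Nat.Coprime.pow_right 3 (Nat.coprime_two_right.2 hδ))
  obtain ⟨p, hpN, hp, hp8, hpm⟩ :=
    Nat.exists_prime_gt_natCast_eq_and_natCast_eq h8m hδ8 isUnit_one.neg N
  refine ⟨p, hpN, hp, (ZMod.natCast_eq_natCast_iff' p δ 8).1 hp8, ?_⟩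
  rw [← ZMod.natCast_eq_zero_iff]
  push_cast
  rw [hpm, neg_add_cancel]

theorem legendreSym_eq_χ₄_of_dvd_add_one {m p : ℕ} [Fact p.Prime] (hm : Odd m)
    (hp : p % 4 = 1) (hmp : m ∣ p + 1) : legendreSym p m = ZMod.χ₄ m := by
  have hpm : (p : ℤ) ≡ -1 [ZMOD m] := Int.modEq_iff_dvd.2 <| by
    rw [show (-1 : ℤ) - p = -((p + 1 : ℕ) : ℤ) by push_cast; ring]
    exact (Int.natCast_dvd_natCast.2 hmp).neg_right
  rw [jacobiSym.legendreSym.to_jacobiSym, jacobiSym.quadratic_reciprocity_one_mod_four' hm hp,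
    jacobiSym.mod_left' hpm, jacobiSym.at_neg_one hm]

theorem isSquare_natCast_of_legendreSym_eq_one {m p : ℕ} [Fact p.Prime] (hm : 0 < m)
    (hmp : m < p) (h : legendreSym p m = 1) : IsSquare (m : ZMod p) := by
  have hne : ((m : ℤ) : ZMod p) ≠ 0 := by
    rw [Int.cast_natCast, Ne, ZMod.natCast_eq_zero_iff]
    exact Nat.not_dvd_of_pos_of_lt hm hmp
  exact_mod_cast (legendreSym.eq_one_iff p hne).1 h

theorem exists_prime_dvd_add_one_isSquare {m : ℕ} (hm : m % 4 = 1 ∨ m % 4 = 2) :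
    ∃ p, p.Prime ∧ m < p ∧ p % 4 = 1 ∧ m ∣ p + 1 ∧ IsSquare (m : ZMod p) := by
  rcases hm with hm | hm
  · have hmo : Odd m := Nat.odd_iff.2 (by omega)
    obtain ⟨p, hpm, hp, hp8, hdvd⟩ := exists_prime_mod_eight_dvd_add_one hmo odd_one m
    have : Fact p.Prime := ⟨hp⟩
    have hp4 : p % 4 = 1 := by omega
    refine ⟨p, hp, hpm, hp4, hdvd, isSquare_natCast_of_legendreSym_eq_one (by omega) hpm ?_⟩
    rw [legendreSym_eq_χ₄_of_dvd_add_one hmo hp4 hdvd, ZMod.χ₄_nat_mod_four, hm]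
    rfl
  · obtain ⟨m', rfl⟩ : ∃ m', m = 2 * m' := ⟨m / 2, by omega⟩
    have hm' : Odd m' := Nat.odd_iff.2 (by omega)
    -- `p` is chosen modulo 8 so that `(2 / p) = χ₈ p` cancels `(m' / p) = χ₄ m'`
    obtain ⟨p, hpm, hp, hp8, hdvd⟩ := exists_prime_mod_eight_dvd_add_one hm'
      (δ := if m' % 4 = 1 then 1 else 5) (by split_ifs <;> decide) (2 * m')
    have : Fact p.Prime := ⟨hp⟩
    have hp4 : p % 4 = 1 := by split_ifs at hp8 <;> omega
    refine ⟨p, hp, hpm, hp4, Nat.Coprime.mul_dvd_of_dvd_of_dvd (Nat.coprime_two_left.2 hm')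
      (by omega) hdvd, isSquare_natCast_of_legendreSym_eq_one (by omega) hpm ?_⟩
    push_cast
    rw [legendreSym.mul, legendreSym.at_two (by omega),
      legendreSym_eq_χ₄_of_dvd_add_one hm' hp4 hdvd, ZMod.χ₈_nat_mod_eight, hp8,
      ZMod.χ₄_nat_mod_four]
    rcases Nat.odd_mod_four_iff.1 (Nat.odd_iff.1 hm') with h | h <;> rw [h] <;> decide

theorem exists_sq_add_sq_add_sq_of_squarefree {m : ℕ} (hm : Squarefree m)
    (h4 : m % 4 = 1 ∨ m % 4 = 2) : ∃ a b c : ℚ, a ^ 2 + b ^ 2 + c ^ 2 = m := by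
  obtain rfl | hm2 : m = 1 ∨ 2 ≤ m := by omega
  · exact ⟨1, 0, 0, by norm_num⟩
  obtain ⟨p, hp, hmp, hp4, hdvd, hsq⟩ := exists_prime_dvd_add_one_isSquare h4
  exact exists_sq_add_sq_add_sq_of_prime hm hm2 hp hp4 (Nat.not_dvd_of_pos_of_lt (by omega) hmp)
    hdvd hsq

theorem Rat.exists_sq_add_sq_add_sq_eq_or_eq_two_mul {q : ℚ} (hq : 0 < q) :
    ∃ a b c : ℚ, a ^ 2 + b ^ 2 + c ^ 2 = q ∨ a ^ 2 + b ^ 2 + c ^ 2 = 2 * q := by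
  obtain ⟨m, s, hsm, hm⟩ := Nat.sq_mul_squarefree (q.num.toNat * q.den)
  set k : ℚ := s / q.den
  have hqm : q = m * k ^ 2 := by
    have hnum : (q.num.toNat : ℚ) = q.num := by
      exact_mod_cast Int.toNat_of_nonneg (Rat.num_nonneg.2 hq.le)
    have hsm' : (s : ℚ) ^ 2 * m = q.num * q.den := by rw [← hnum]; exact_mod_cast hsm
    rw [div_pow, mul_div_assoc', eq_div_iff (by positivity), mul_comm (m : ℚ), hsm']
    nth_rw 1 [← Rat.num_div_den q]
    field_simp
  have h4 : ¬4 ∣ m := fun h => absurd (hm 2 (by simpa using h)) (by decide)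
  by_cases h3 : m % 4 = 3
  · have h2m : Squarefree (2 * m) := Nat.squarefree_mul_iff.2
      ⟨Nat.coprime_two_left.2 (Nat.odd_iff.2 (by omega)), Nat.prime_two.squarefree, hm⟩
    obtain ⟨a, b, c, habc⟩ := exists_sq_add_sq_add_sq_of_squarefree h2m (by omega)
    refine ⟨a * k, b * k, c * k, .inr ?_⟩
    push_cast at habc
    rw [hqm, ← mul_assoc, ← habc]
    ring
  · obtain ⟨a, b, c, habc⟩ := exists_sq_add_sq_add_sq_of_squarefree hm (by omega)
    exact ⟨a * k, b * k, c * k, .inl (by rw [hqm, ← habc]; ring)⟩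

theorem pos_iff_exists_one_sub_mul_mul_one_sub_two_mul_eq_zero (u : ℚ) :
    0 < u ↔ ∃ v : Fin 3 → ℚ, (1 - u * (v 0 ^ 2 + v 1 ^ 2 + v 2 ^ 2)) *
      (1 - 2 * u * (v 0 ^ 2 + v 1 ^ 2 + v 2 ^ 2)) = 0 := by
  constructor
  · intro hu
    obtain ⟨a, b, c, h | h⟩ := Rat.exists_sq_add_sq_add_sq_eq_or_eq_two_mul (q := 1 / (2 * u))
      (by positivity)
    · refine ⟨![a, b, c], mul_eq_zero_of_right _ ?_⟩
      simp only [Matrix.cons_val, h]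
      field_simp
      ring
    · refine ⟨![a, b, c], mul_eq_zero_of_left ?_ _⟩
      simp only [Matrix.cons_val, h]
      field_simp
      ring
  · rintro ⟨v, hv⟩
    by_contra! hu
    have hV : 0 ≤ v 0 ^ 2 + v 1 ^ 2 + v 2 ^ 2 := by positivity
    rcases mul_eq_zero.1 hv with h | h <;> nlinarith [mul_nonpos_of_nonpos_of_nonneg hu hV]

theorem exists_eq_zero_or_exists_pos_iff {ι κ : Type*} [Fintype ι] [Fintype κ] (t : ι → ℚ)
    (u : κ → ℚ) :
    ((∃ j, t j = 0) ∨ ∃ k, 0 < u k) ↔ ∃ v : Fin 3 → ℚ, (∏ j, t j) *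
      ∏ k, (1 - u k * (v 0 ^ 2 + v 1 ^ 2 + v 2 ^ 2)) *
        (1 - 2 * u k * (v 0 ^ 2 + v 1 ^ 2 + v 2 ^ 2)) = 0 := by
  constructor
  · rintro (⟨j, hj⟩ | ⟨k, hk⟩)
    · exact ⟨0, mul_eq_zero_of_left (Finset.prod_eq_zero (Finset.mem_univ j) hj) _⟩
    · obtain ⟨v, hv⟩ := (pos_iff_exists_one_sub_mul_mul_one_sub_two_mul_eq_zero _).1 hk
      exact ⟨v, mul_eq_zero_of_right _ (Finset.prod_eq_zero (Finset.mem_univ k) hv)⟩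
  · rintro ⟨v, hv⟩
    rcases mul_eq_zero.1 hv with h | h
    · obtain ⟨j, -, hj⟩ := Finset.prod_eq_zero_iff.1 h
      exact .inl ⟨j, hj⟩
    · obtain ⟨k, -, hk⟩ := Finset.prod_eq_zero_iff.1 h
      exact .inr ⟨k, (pos_iff_exists_one_sub_mul_mul_one_sub_two_mul_eq_zero _).2 ⟨v, hk⟩⟩

theorem boolean_elim_E3d_over_Q_general (d e f : ℕ)
    (t : Fin d → Fin e → ℚ) (u : Fin d → Fin f → ℚ) :
    (∀ i : Fin d, (∃ j : Fin e, t i j = 0) ∨ (∃ k : Fin f, u i k > 0)) ↔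
    (∃ v : Fin d → Fin 3 → ℚ,
      ∑ i : Fin d,
        ((∏ j : Fin e, t i j) *
          (∏ k : Fin f,
            (1 - u i k * ((v i 0) ^ 2 + (v i 1) ^ 2 + (v i 2) ^ 2)) *
              (1 - 2 * u i k * ((v i 0) ^ 2 + (v i 1) ^ 2 + (v i 2) ^ 2)))) ^ 2 = 0) := by
  simp only [gt_iff_lt, exists_eq_zero_or_exists_pos_iff, Classical.skolem]
  refine exists_congr fun v => ?_
  rw [Finset.sum_eq_zero_iff_of_nonneg fun i _ => sq_nonneg _]
  simp

theorem boolean_elim_E3d_over_Q (d e f : ℕ) (hd : 0 < d) (he : 0 < e) (hf : 0 < f)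
    (t : Fin d → Fin e → ℚ) (u : Fin d → Fin f → ℚ) :
    (∀ i : Fin d, (∃ j : Fin e, t i j = 0) ∨ (∃ k : Fin f, u i k > 0)) ↔
    (∃ v : Fin d → Fin 3 → ℚ,
      ∑ i : Fin d,
        ((∏ j : Fin e, t i j) *
          (∏ k : Fin f,
            (1 - u i k * ((v i 0) ^ 2 + (v i 1) ^ 2 + (v i 2) ^ 2)) *
              (1 - 2 * u i k * ((v i 0) ^ 2 + (v i 1) ^ 2 + (v i 2) ^ 2)))) ^ 2 = 0) :=
  boolean_elim_E3d_over_Q_general d e f t u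
end
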